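/- Let w=i_n⋯i_1 be a reverse lattice word and σ=std(w). Then T_w = P(σ^{-1}), the insertion tableau of σ^{-1} under the variant Robinson–Schensted algorithm. -/

import Mathlib

open scoped BigOperators

namespace CompJdt

/-! ### Compositions, partitions, diagrams -/

/-- A (strong) composition: a list of positive integers. -/
def IsComposition (α : List ℕ) : Prop := ∀ x ∈ α, 0 < x

/-- A partition, recorded bottom row first (French convention):
weakly decreasing list of positive integers. -/
def IsPartition (lam : List ℕ) : Prop := (∀ x ∈ lam, 0 < x) ∧ lam.Pairwise (· ≥ ·)

/-- Box `(r, c)` (1-based row and column) belongs to the diagram of `α`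
(row `r` has `α r` boxes). For reverse composition diagrams rows are counted
from the top; for partition diagrams (French convention) from the bottom. -/
abbrev InD (α : List ℕ) (r c : ℕ) : Prop := 1 ≤ r ∧ 1 ≤ c ∧ c ≤ α.getD (r - 1) 0

/-- Box `(r,c)` lies in the inner shape `β` of the skew reverse composition shape
`δ // β` (`β` drawn in the bottom-left corner of `δ`). -/
abbrev InInnerC (δ β : List ℕ) (r c : ℕ) : Prop :=
  δ.length - β.length < r ∧ 1 ≤ c ∧ c ≤ β.getD (r - (δ.length - β.length) - 1) 0

/-- Box of the skew reverse composition shape `δ // β`. -/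
abbrev InSkewC (δ β : List ℕ) (r c : ℕ) : Prop := InD δ r c ∧ ¬ InInnerC δ β r c

/-- Box of the skew partition shape `lam / mu` (French convention). -/
abbrev InSkewP (lam mu : List ℕ) (r c : ℕ) : Prop := InD lam r c ∧ ¬ InD mu r c

/-- There is an addable node in column `c` of the partition obtained by sorting `l`. -/
abbrev HasAddable (l : List ℕ) (c : ℕ) : Prop := c = 1 ∨ (c - 1) ∈ l

/-! ### Tableaux as fillings (zero outside the shape) -/

/-- Semistandard reverse composition tableau of skew shape `δ // β`:
rows weakly decrease left to right, first-column entries strictly increase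
top to bottom, triple rule. -/
def IsSSRCTSkew (δ β : List ℕ) (τ : ℕ → ℕ → ℕ) : Prop :=
  (∀ r c, ¬ InSkewC δ β r c → τ r c = 0) ∧
  (∀ r c, InSkewC δ β r c → 0 < τ r c) ∧
  (∀ r c, 1 ≤ c → InSkewC δ β r c → InSkewC δ β r (c+1) → τ r (c+1) ≤ τ r c) ∧
  (∀ r r', InSkewC δ β r 1 → InSkewC δ β r' 1 → r < r' → τ r 1 < τ r' 1) ∧
  (∀ i j k, 1 ≤ k → i < j → InSkewC δ β j (k+1) →
     (InInnerC δ β i k ∨ (InSkewC δ β i k ∧ τ j (k+1) ≤ τ i k)) →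
     (InInnerC δ β i (k+1) ∨ (InSkewC δ β i (k+1) ∧ τ j (k+1) < τ i (k+1))))

def IsSSRCT (α : List ℕ) (τ : ℕ → ℕ → ℕ) : Prop := IsSSRCTSkew α [] τ

/-- Standard reverse composition tableau of skew shape: a semistandard one whose
entries are a bijection onto `{1, …, |δ| - |β|}`. -/
def IsSRCTSkew (δ β : List ℕ) (τ : ℕ → ℕ → ℕ) : Prop :=
  IsSSRCTSkew δ β τ ∧
  (∀ r c, InSkewC δ β r c → τ r c ≤ δ.sum - β.sum) ∧
  (∀ r c r' c', InSkewC δ β r c → InSkewC δ β r' c' → τ r c = τ r' c' → (r, c) = (r', c')) ∧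
  (∀ m, 1 ≤ m → m ≤ δ.sum - β.sum → ∃ r c, InSkewC δ β r c ∧ τ r c = m)

def IsSRCT (α : List ℕ) (τ : ℕ → ℕ → ℕ) : Prop := IsSRCTSkew α [] τ

/-- Semistandard reverse tableau of skew partition shape (French convention):
rows weakly decrease left to right, columns strictly decrease bottom to top. -/
def IsSSRTSkew (lam mu : List ℕ) (T : ℕ → ℕ → ℕ) : Prop :=
  (∀ r c, ¬ InSkewP lam mu r c → T r c = 0) ∧
  (∀ r c, InSkewP lam mu r c → 0 < T r c) ∧
  (∀ r c, 1 ≤ c → InSkewP lam mu r c → InSkewP lam mu r (c+1) → T r (c+1) ≤ T r c) ∧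
  (∀ r c, 1 ≤ r → InSkewP lam mu r c → InSkewP lam mu (r+1) c → T (r+1) c < T r c)

def IsSSRT (lam : List ℕ) (T : ℕ → ℕ → ℕ) : Prop := IsSSRTSkew lam [] T

def IsSRTSkew (lam mu : List ℕ) (T : ℕ → ℕ → ℕ) : Prop :=
  IsSSRTSkew lam mu T ∧
  (∀ r c, InSkewP lam mu r c → T r c ≤ lam.sum - mu.sum) ∧
  (∀ r c r' c', InSkewP lam mu r c → InSkewP lam mu r' c' → T r c = T r' c' → (r, c) = (r', c')) ∧
  (∀ m, 1 ≤ m → m ≤ lam.sum - mu.sum → ∃ r c, InSkewP lam mu r c ∧ T r c = m)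

def IsSRT (lam : List ℕ) (T : ℕ → ℕ → ℕ) : Prop := IsSRTSkew lam [] T

/-! ### Operators on compositions -/

/-- Box removing operator `d_i`: subtract 1 from the rightmost part equal to `i`
(omit it if it becomes 0); undefined (`none`) if there is no such part. -/
def boxRemove (i : ℕ) : List ℕ → Option (List ℕ)
  | [] => none
  | a :: s =>
    match boxRemove i s with
    | some s' => some (a :: s')
    | none => if a = i then some (if i = 1 then s else (i - 1) :: s) else none

/-- `vSeq k = d_1 ∘ d_2 ∘ ⋯ ∘ d_k` (apply `d_k` first). -/
def vSeq : ℕ → List ℕ → Option (List ℕ)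
  | 0, α => some α
  | k+1, α => (boxRemove (k+1) α).bind (vSeq k)

/-- Jeu de taquin operator `u_i = a_i ∘ d_1 ∘ d_2 ∘ ⋯ ∘ d_{i-1}`. -/
def uOp (i : ℕ) (α : List ℕ) : Option (List ℕ) := (vSeq (i - 1) α).map (· ++ [i])

/-- Apply `u_{i_1}, …, u_{i_n}` in order (`l = [i_1, …, i_n]`), each application
required to be defined. -/
def uSeq (l : List ℕ) (α : List ℕ) : Option (List ℕ) :=
  l.foldl (fun o i => o.bind (uOp i)) (some α)

/-- Cover relation of the poset `R_c`. -/
def CoverR (γ δ : List ℕ) : Prop := ∃ i, 0 < i ∧ uOp i γ = some δ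

/-- Cover relation `β ⋖_c α` of the reverse composition poset `L_c`. -/
def CoverC (β α : List ℕ) : Prop :=
  α = 1 :: β ∨ ∃ k, k < β.length ∧ α = β.set k (β.getD k 0 + 1) ∧
    ∀ i < k, β.getD i 0 ≠ β.getD k 0

/-! ### Noncommutative symmetric functions -/

/-- The algebra `NSym` of noncommutative symmetric functions: the free associative
`ℚ`-algebra on generators `h_1, h_2, …` (generator `i` is `h_i`). -/
abbrev NSym := FreeAlgebra ℚ ℕ

/-- `h_α = h_{α_1} ⋯ h_{α_k}`. -/
def hFun (α : List ℕ) : NSym := (α.map (FreeAlgebra.ι ℚ)).prod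

/-- `α ⪰ β`: `α` is obtained by adding together adjacent parts of `β` in order. -/
def Coarsens (α β : List ℕ) : Prop :=
  ∃ L : List (List ℕ), (∀ l ∈ L, l ≠ []) ∧ L.flatten = β ∧ L.map List.sum = α

/-- Noncommutative ribbon Schur function `R_β`. -/
noncomputable def Ribbon (β : List ℕ) : NSym :=
  ∑ᶠ α ∈ {α : List ℕ | Coarsens α β}, ((-1 : ℚ) ^ (β.length - α.length)) • hFun α

/-- `m` is a descent of the SRCT `τ` (of shape `α`): `m+1` lies weakly right of `m`. -/
def IsDescent (α : List ℕ) (τ : ℕ → ℕ → ℕ) (m : ℕ) : Prop :=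
  ∃ r c r' c', InD α r c ∧ InD α r' c' ∧ τ r c = m ∧ τ r' c' = m + 1 ∧ c ≤ c'

/-- The descent composition of `τ` is `β`, i.e. the descent set of `τ` equals
`set(β) = {β_1, β_1+β_2, …}`. -/
def HasDescentComp (α β : List ℕ) (τ : ℕ → ℕ → ℕ) : Prop :=
  ∀ m, IsDescent α τ m ↔ ∃ k, 1 ≤ k ∧ k < β.length ∧ (β.take k).sum = m

/-- `d_{αβ}`: the number of SRCTs of shape `α` with descent composition `β`. -/
noncomputable def dCount (α β : List ℕ) : ℕ :=
  Nat.card {τ : ℕ → ℕ → ℕ // IsSRCT α τ ∧ HasDescentComp α β τ}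

/-! ### words, standardization, variant Robinson–Schensted -/

/-- Reverse lattice word: in every suffix, `j+1` occurs at most as often as `j`. -/
def ReverseLattice (w : List ℕ) : Prop :=
  (∀ x ∈ w, 0 < x) ∧ ∀ s ∈ w.tails, ∀ j : ℕ, s.count (j + 2) ≤ s.count (j + 1)

/-- Standardization of a word (read left to right), in one-line notation. -/
def stdList (w : List ℕ) : List ℕ :=
  (List.range w.length).map (fun p =>
    (w.filter (fun x => decide (x < w.getD p 0))).length +
    ((w.take (p + 1)).filter (fun x => decide (x = w.getD p 0))).length)

/-- Inverse of a permutation given in one-line notation. -/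
def invList (σ : List ℕ) : List ℕ :=
  (List.range σ.length).map (fun k => σ.idxOf (k + 1) + 1)

/-- Row insertion for reverse tableaux: `y` replaces (and bumps) the greatest
entry smaller than `y`, or is appended at the end of the row. -/
def insertRow (y : ℕ) : List ℕ → List ℕ × Option ℕ
  | [] => ([y], none)
  | a :: s =>
    if a < y then (y :: s, some a)
    else
      let p := insertRow y s
      (a :: p.1, p.2)

/-- Insert `y` into a reverse tableau (rows listed bottom to top); returns the new
tableau and the (1-based) index of the row where a new box was created. -/
def insertT (y : ℕ) : List (List ℕ) → List (List ℕ) × ℕ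
  | [] => ([[y]], 1)
  | row :: rest =>
    match insertRow y row with
    | (row', none) => (row' :: rest, 1)
    | (row', some b) =>
      let p := insertT b rest
      (row' :: p.1, p.2 + 1)

/-- Append the value `v` at the end of row `r` of a tableau. -/
def addEntryAt (r v : ℕ) (Q : List (List ℕ)) : List (List ℕ) :=
  if r ≤ Q.length then Q.set (r - 1) (Q.getD (r - 1) [] ++ [v]) else Q ++ [[v]]

/-- Variant Robinson–Schensted: insert the values in order; the `i`-th insertion
records `n - i + 1` in the recording tableau. -/
def RSaux : List ℕ → ℕ → List (List ℕ) × List (List ℕ) → List (List ℕ) × List (List ℕ)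
  | [], _, pq => pq
  | y :: rest, v, (P, Q) =>
    let p := insertT y P
    RSaux rest (v - 1) (p.1, addEntryAt p.2 v Q)

/-- Insertion tableau `P(σ)` of the variant Robinson–Schensted algorithm. -/
def PTab (σ : List ℕ) : List (List ℕ) := (RSaux σ σ.length ([], [])).1

/-- Recording tableau `Q(σ)` of the variant Robinson–Schensted algorithm. -/
def QTab (σ : List ℕ) : List (List ℕ) := (RSaux σ σ.length ([], [])).2

/-- Add a box (with value `v`) at the addable node in column `i` of a tableau
given by its rows (bottom to top). -/
def addBoxCol (i v : ℕ) : List (List ℕ) → List (List ℕ)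
  | [] => [[v]]
  | row :: rest =>
    if row.length + 1 = i then (row ++ [v]) :: rest else row :: addBoxCol i v rest

/-- The SRT `T_w` associated with a reverse lattice word `w = i_n ⋯ i_1` (read left
to right): the box added at step `k` (in column `i_k`) receives entry `n - k + 1`. -/
def TwTab (w : List ℕ) : List (List ℕ) :=
  (List.range w.length).foldl
    (fun t k => addBoxCol (w.reverse.getD k 0) (w.length - k) t) []

/-- Column `c` of a tableau given by its list of rows (bottom to top). -/
def colA (t : List (List ℕ)) (c : ℕ) : List ℕ := t.filterMap (fun row => row[c - 1]?)

/-- Column reading word: entries of each column in increasing order, columns left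
to right. -/
def colWordL (t : List (List ℕ)) : List ℕ :=
  ((List.range ((t.map List.length).foldr max 0)).map
    (fun c0 => (colA t (c0 + 1)).insertionSort (· ≤ ·))).flatten

/-- The filling function of a tableau given by its list of rows. -/
def tabFun (t : List (List ℕ)) (r c : ℕ) : ℕ := (t.getD (r - 1) []).getD (c - 1) 0

/-- The shape of a tableau given by its list of rows. -/
def tabShape (t : List (List ℕ)) : List ℕ := t.map List.length

/-- Column reading word of a filling with row lengths bounded by the shape `δ`:
positive entries of each column in increasing order, columns left to right. -/
def colWordF (δ : List ℕ) (τ : ℕ → ℕ → ℕ) : List ℕ :=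
  ((List.range (δ.foldr max 0)).map (fun c0 =>
    (((List.range δ.length).map (fun r0 => τ (r0 + 1) (c0 + 1))).filter
        (fun v => decide (0 < v))).insertionSort (· ≤ ·))).flatten

/-! ### Backward jeu de taquin slides on (skew) SSRT -/

/-- `(r, c)` is an addable node of the partition `mu`. -/
abbrev AddableAt (mu : List ℕ) (r c : ℕ) : Prop :=
  1 ≤ r ∧ c = mu.getD (r - 1) 0 + 1 ∧ (r = 1 ∨ c ≤ mu.getD (r - 2) 0)

/-- One step of a backward slide: the empty box at `c` is filled from the smaller
of the entries below and to the left (below on a tie). -/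
def slideStepB (lam mu : List ℕ) (T : ℕ → ℕ → ℕ) (c : ℕ × ℕ) : ℕ × ℕ :=
  if InSkewP lam mu (c.1 - 1) c.2 then
    if InSkewP lam mu c.1 (c.2 - 1) then
      if T (c.1 - 1) c.2 ≤ T c.1 (c.2 - 1) then (c.1 - 1, c.2) else (c.1, c.2 - 1)
    else (c.1 - 1, c.2)
  else (c.1, c.2 - 1)

/-- Backward slide loop; also records (in a list) the entries that move
horizontally.  Returns (new filling, final empty box, horizontal entries). -/
def bSlideAux (lam mu : List ℕ) :
    ℕ → (ℕ → ℕ → ℕ) → ℕ × ℕ → List ℕ → (ℕ → ℕ → ℕ) × (ℕ × ℕ) × List ℕ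
  | 0, T, c, H => (T, c, H)
  | fuel+1, T, c, H =>
    if AddableAt mu c.1 c.2 then ((fun r cc => if (r, cc) = c then 0 else T r cc), c, H)
    else
      let c' := slideStepB lam mu T c
      bSlideAux lam mu fuel
        (fun r cc => if (r, cc) = c then T c'.1 c'.2 else T r cc) c'
        (if c'.1 = c.1 then T c'.1 c'.2 :: H else H)

/-- Backward jeu de taquin slide `jdt_{j₀}` starting at the addable node of `lam`
in column `j₀`, for a filling of the skew shape `lam / mu`. Returns the new
filling, the box added to the inner shape, and the multiset (as a list) of
entries that moved horizontally. -/
def jdtB (lam mu : List ℕ) (j0 : ℕ) (T : ℕ → ℕ → ℕ) :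
    (ℕ → ℕ → ℕ) × (ℕ × ℕ) × List ℕ :=
  bSlideAux lam mu (lam.length + j0 + 2) T
    (lam.countP (fun p => decide (j0 ≤ p)) + 1, j0) []

/-- Add a box at the addable node of the partition `lam` in column `c`. -/
def addBoxP (lam : List ℕ) (c : ℕ) : List ℕ :=
  let r := lam.countP (fun p => decide (c ≤ p))
  if r < lam.length then lam.set r (lam.getD r 0 + 1) else lam ++ [1]

/-- Add a box to the partition `mu` at the end of row `r`. -/
def addBoxRow (mu : List ℕ) (r : ℕ) : List ℕ :=
  if r ≤ mu.length then mu.set (r - 1) (mu.getD (r - 1) 0 + 1) else mu ++ [1]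

/-- Iterate backward jdt slides `jdt_{j}` (columns taken from the list in order),
tracking outer shape, inner shape and filling. -/
def jdtIter : List ℕ → List ℕ × List ℕ × (ℕ → ℕ → ℕ) → List ℕ × List ℕ × (ℕ → ℕ → ℕ)
  | [], s => s
  | j :: rest, (lam, mu, T) =>
    let res := jdtB lam mu j T
    jdtIter rest (addBoxP lam j, addBoxRow mu res.2.1.1, res.1)

/-- Validity of a sequence of slide columns on a partition: at each step, the
current outer shape has an addable node in the required column. -/
def ValidSeqP : List ℕ → List ℕ → Prop
  | [], _ => True
  | j :: rest, lam => 0 < j ∧ HasAddable lam j ∧ ValidSeqP rest (addBoxP lam j)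

/-! ### `f`, `tjdt` -/

/-- The row of `f_{i+1}(T)`: the largest row `r` with `T r i < T (r-1) (i+1)`
(with the convention `T 0 s = ∞`, i.e. boxes absent above count as `∞`). -/
def fRow (lam : List ℕ) (T : ℕ → ℕ → ℕ) (i : ℕ) : ℕ :=
  ((List.range (lam.length + 1)).filter (fun r =>
    decide (InD lam r i ∧ (¬ InD lam (r - 1) (i + 1) ∨ T r i < T (r - 1) (i + 1))))).foldr
    max 0

/-- `tjdt_{i+1}(T)`: delete the entry `f_{i+1}(T)` from column `i` and slide every
entry of column `i` above it down one row. -/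
def tjdtFun (lam : List ℕ) (T : ℕ → ℕ → ℕ) (i : ℕ) : ℕ → ℕ → ℕ :=
  fun p q => if q = i ∧ fRow lam T i ≤ p then T (p + 1) q else T p q

/-- The shape of `tjdt_{i+1}(T)`: remove the topmost box of column `i`. -/
def tjdtShape (lam : List ℕ) (i : ℕ) : List ℕ :=
  let m := lam.countP (fun p => decide (i ≤ p))
  (lam.set (m - 1) (lam.getD (m - 1) 0 - 1)).filter (fun x => decide (x ≠ 0))

/-! ### `φ`, `Φ`, `μ` on SSRCT -/

/-- The index `r₁`: the bottommost (largest index) row of `α` of size `i`. -/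
def r1? (α : List ℕ) (i : ℕ) : Option ℕ :=
  let l := (List.range (α.length + 1)).filter (fun r => decide (1 ≤ r ∧ α.getD (r - 1) 0 = i))
  if l = [] then none else some (l.foldr max 0)

/-- Next index: the greatest `r < rp` with `τ r i > τ rp i ≥ τ r (i+1)`. -/
def nextR (τ : ℕ → ℕ → ℕ) (i rp : ℕ) : Option ℕ :=
  let l := (List.range rp).filter (fun r =>
    decide (1 ≤ r ∧ τ rp i < τ r i ∧ τ r (i + 1) ≤ τ rp i))
  if l = [] then none else some (l.foldr max 0)

def rChainAux (τ : ℕ → ℕ → ℕ) (i : ℕ) : ℕ → ℕ → List ℕ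
  | 0, r => [r]
  | fuel+1, r =>
    match nextR τ i r with
    | none => [r]
    | some r' => r :: rChainAux τ i fuel r'

/-- The list `[r₁, …, r_k]` used by `φ_{i+1}`. -/
def rChain (α : List ℕ) (τ : ℕ → ℕ → ℕ) (i : ℕ) : List ℕ :=
  match r1? α i with
  | none => []
  | some r1 => rChainAux τ i r1 r1

/-- The filling `φ_{i+1}(τ)`: entry of box `(r_j, i)` is replaced by that of box
`(r_{j-1}, i)` (so `τ (r_k) i` exits), and box `(r₁, i)` is removed. -/
def phiFun (α : List ℕ) (τ : ℕ → ℕ → ℕ) (i : ℕ) : ℕ → ℕ → ℕ :=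
  fun r c =>
    let rs := rChain α τ i
    if c = i ∧ r ∈ rs then
      (if rs.idxOf r = 0 then 0 else τ (rs.getD (rs.idxOf r - 1) 0) i)
    else τ r c

/-- The entry that exits the tableau when applying `φ_{i+1}`. -/
def exitEnt (α : List ℕ) (τ : ℕ → ℕ → ℕ) (i : ℕ) : ℕ :=
  match (rChain α τ i).getLast? with
  | some rk => τ rk i
  | none => 0

/-- `Φ_{m+1} = φ_2 ∘ φ_3 ∘ ⋯ ∘ φ_{m+1}` together with shape and the list of
exited entries: `PhiAux m (α, τ, [])` computes `Φ_{m+1}(τ)`. -/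
def PhiAux : ℕ → List ℕ × (ℕ → ℕ → ℕ) × List ℕ → List ℕ × (ℕ → ℕ → ℕ) × List ℕ
  | 0, s => s
  | m+1, (α, τ, H) =>
    PhiAux m ((boxRemove (m+1) α).getD α, phiFun α τ (m+1), exitEnt α τ (m+1) :: H)

/-- The largest entry of a filling of shape `α`. -/
def maxEnt (α : List ℕ) (τ : ℕ → ℕ → ℕ) : ℕ :=
  ((List.range α.length).map (fun r0 =>
    ((List.range (α.getD r0 0)).map (fun c0 => τ (r0 + 1) (c0 + 1))).foldr max 0)).foldr max 0

/-- Backward jeu de taquin slide `μ_i` on a straight-shape SSRCT `τ` of shape `α`: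
compute `Φ_i(τ)` (of shape `γ`), then add a bottom row of length `i` whose first
box is the inner box `(1)` and whose remaining boxes carry the exited entries in
decreasing order.  Returns the outer shape `(γ, i)` and the filling (zero on the
inner box). -/
def muFun (α : List ℕ) (τ : ℕ → ℕ → ℕ) (i : ℕ) : List ℕ × (ℕ → ℕ → ℕ) :=
  let res := PhiAux (i - 1) (α, τ, [])
  let γ := res.1
  let τ' := res.2.1
  let Hs := res.2.2.insertionSort (· ≥ ·)
  (γ ++ [i], fun r c =>
    if r = γ.length + 1 then (if 2 ≤ c ∧ c ≤ i then Hs.getD (c - 2) 0 else 0)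
    else τ' r c)

/-- `μ_i` with the convention that the vacated bottom-left corner is filled with a
new largest entry `max(τ) + 1`, so the result is again of straight shape. -/
def muFunMax (α : List ℕ) (τ : ℕ → ℕ → ℕ) (i : ℕ) : List ℕ × (ℕ → ℕ → ℕ) :=
  let res := PhiAux (i - 1) (α, τ, [])
  let γ := res.1
  let τ' := res.2.1
  let Hs := res.2.2.insertionSort (· ≥ ·)
  (γ ++ [i], fun r c =>
    if r = γ.length + 1 then
      (if c = 1 then maxEnt α τ + 1 else if 2 ≤ c ∧ c ≤ i then Hs.getD (c - 2) 0 else 0)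
    else τ' r c)

/-- Apply `μ_{i_1}, …, μ_{i_n}` (under the `max + 1` convention) to the empty SSRCT. -/
def muSeqMax (l : List ℕ) : List ℕ × (ℕ → ℕ → ℕ) :=
  l.foldl (fun p i => muFunMax p.1 p.2 i) ([], fun _ _ => 0)

/-- The canonical tableau `τ_α`: the `r`-th row from the top contains
`1 + Σ_{i<r} α_i, …, Σ_{i≤r} α_i` written right to left. -/
def canonTab (α : List ℕ) (r c : ℕ) : ℕ :=
  if InD α r c then (α.take r).sum + 1 - c else 0

/-- The inner shape of a skew filling: row lengths of the zero region inside `δ`. -/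
def innerOf (δ : List ℕ) (τ : ℕ → ℕ → ℕ) : List ℕ :=
  ((List.range δ.length).map (fun r0 =>
    ((List.range (δ.getD r0 0)).filter (fun c0 => decide (τ (r0 + 1) (c0 + 1) = 0))).length)).filter
    (fun x => decide (x ≠ 0))

/-- `μ_i` on a skew SSRCT (outer shape `δ`, inner boxes the zero region): complete
the inner shape with entries strictly larger than every entry, apply `μ_i`, and
retain only the original entries. -/
def muSkew (δ : List ℕ) (τ : ℕ → ℕ → ℕ) (i : ℕ) : List ℕ × (ℕ → ℕ → ℕ) :=
  let β := innerOf δ τ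
  let M := maxEnt δ τ
  let off := δ.length - β.length
  let full : ℕ → ℕ → ℕ := fun r c =>
    if InD δ r c ∧ τ r c = 0 then M + canonTab β (r - off) c else τ r c
  let res := muFun δ full i
  (res.1, fun r c => if M < res.2 r c then 0 else res.2 r c)

/-- Iterate `μ` slides on a (possibly skew) SSRCT. -/
def muIterSkew : List ℕ → List ℕ × (ℕ → ℕ → ℕ) → List ℕ × (ℕ → ℕ → ℕ)
  | [], p => p
  | j :: rest, (δ, τ) => muIterSkew rest (muSkew δ τ j)

/-- Validity of a sequence of `μ` slides on a composition: at each step the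
sorted outer shape has an addable node in the required column. -/
def ValidSeqU : List ℕ → List ℕ → Prop
  | [], _ => True
  | j :: rest, γ => 0 < j ∧ HasAddable γ j ∧ ValidSeqU rest ((uOp j γ).getD γ)

/-! ### Forward slides and evacuation -/

/-- One step of a forward slide: the empty box is filled from the larger of the
entries above and to the right (above on a tie). -/
def fStep (lam : List ℕ) (T : ℕ → ℕ → ℕ) (c : ℕ × ℕ) : ℕ × ℕ :=
  if InD lam (c.1 + 1) c.2 then
    if InD lam c.1 (c.2 + 1) then
      if T c.1 (c.2 + 1) ≤ T (c.1 + 1) c.2 then (c.1 + 1, c.2) else (c.1, c.2 + 1)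
    else (c.1 + 1, c.2)
  else (c.1, c.2 + 1)

/-- Forward slide loop; returns the final filling and the vacated box. -/
def fSlideAux (lam : List ℕ) :
    ℕ → (ℕ → ℕ → ℕ) → ℕ × ℕ → (ℕ → ℕ → ℕ) × (ℕ × ℕ)
  | 0, T, c => (T, c)
  | fuel+1, T, c =>
    if InD lam (c.1 + 1) c.2 ∨ InD lam c.1 (c.2 + 1) then
      let c' := fStep lam T c
      fSlideAux lam fuel (fun r cc => if (r, cc) = c then T c'.1 c'.2 else T r cc) c'
    else ((fun r cc => if (r, cc) = c then 0 else T r cc), c)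

/-- Remove a box from row `r` of the partition `lam`. -/
def removeAtRow (r : ℕ) (lam : List ℕ) : List ℕ :=
  (lam.set (r - 1) (lam.getD (r - 1) 0 - 1)).filter (fun x => decide (x ≠ 0))

/-- Evacuation loop: repeatedly delete the entry `a` at `(1,1)`, forward-slide,
and record `n - a + 1` at the vacated removable node. -/
def evacAux (n : ℕ) : ℕ → List ℕ → (ℕ → ℕ → ℕ) → (ℕ → ℕ → ℕ) → (ℕ → ℕ → ℕ)
  | 0, _, _, U => U
  | steps+1, lam, T, U =>
    let a := T 1 1
    let res := fSlideAux lam (lam.length + lam.sum + 2)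
      (fun r c => if (r, c) = (1, 1) then 0 else T r c) (1, 1)
    evacAux n steps (removeAtRow res.2.1 lam) res.1
      (fun r c => if (r, c) = res.2 then n - a + 1 else U r c)

/-- Evacuation `e(T)` of a standard reverse tableau of shape `lam ⊢ n`. -/
def evac (n : ℕ) (lam : List ℕ) (T : ℕ → ℕ → ℕ) : ℕ → ℕ → ℕ :=
  evacAux n n lam T (fun _ _ => 0)

/-! ### Chains and Littlewood–Richardson coefficients -/

/-- Number of maximal chains from `α` to `β` in the poset `R_c`. -/
noncomputable def chainCount (α β : List ℕ) : ℕ :=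
  Nat.card {c : List (List ℕ) // c.Chain' CoverR ∧ c.head? = some α ∧ c.getLast? = some β}

/-- A skew SRCT of shape `δ // β` rectifies to the canonical tableau `τ_α`, i.e.
`ρ⁻¹(P(w_τ)) = τ_α` (expressed via matching column multisets). -/
def RectifiesToCanon (δ β α : List ℕ) (τ : ℕ → ℕ → ℕ) : Prop :=
  ∀ c v, 0 < v →
    Nat.card {r : ℕ // InD α r c ∧ canonTab α r c = v} =
      (colA (PTab (colWordF δ τ)) c).count v

/-- The noncommutative Littlewood–Richardson coefficient `C^β_{αγ}`: the number of
SRCTs of shape `β // γ` that rectify to the canonical tableau `τ_α`. -/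
noncomputable def Ccoef (α γ β : List ℕ) : ℕ :=
  Nat.card {τ : ℕ → ℕ → ℕ //
    Relation.TransGen CoverC γ β ∧ IsSRCTSkew β γ τ ∧ RectifiesToCanon β γ α τ}

end CompJdt

/-!
Standardization numbers the `1`s of `w` from left to right, then the `2`s, and so on, so
`std(w)⁻¹` lists the positions of the `1`s in increasing order, then those of the `2`s, and so
on. Both sides of the theorem are the tableau whose column `c` holds, from bottom to top, the
positions of the letter `c` read from right to left.

For `P(std(w)⁻¹)`, inserting the increasing block of positions of `c` into the tableau built
from the smaller letters creates exactly this column, each inserted entry bumping the earlier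
ones one row up. This needs every inserted entry to be smaller than the row it enters, which is
the lattice property: the `i`-th `c` from the right lies left of the `i`-th `b` from the right
for every `b < c`. For `T_w`, induct on `w`: by the lattice property again, the box added in
column `a` for the leftmost letter `a` lands on top of column `a`.
-/

namespace CompJdt

open List

section Positions

variable {w : List ℕ} {c : ℕ}

lemma idxsOf_cons_one (a : ℕ) :
    (a :: w).idxsOf c 1 = (if a = c then [1] else []) ++ (w.idxsOf c 1).map (· + 1) := by
  rw [idxsOf_cons, idxsOf_start (s := 2), idxsOf_start (s := 1), map_map]
  split_ifs <;> simp_all [Function.comp_def]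

lemma reverse_idxsOf_cons_one (a : ℕ) :
    ((a :: w).idxsOf c 1).reverse =
      (w.idxsOf c 1).reverse.map (· + 1) ++ (if a = c then [1] else []) := by
  rw [idxsOf_cons_one, reverse_append, map_reverse]
  split_ifs <;> simp

lemma map_count_take_idxsOf :
    (w.idxsOf c 1).map (fun p => (w.take p).count c) = range' 1 (w.count c) := by
  induction w with
  | nil => rfl
  | cons a t ih =>
    rw [idxsOf_cons_one, map_append, map_map]
    by_cases h : a = c
    · subst h
      have := congrArg (map (1 + ·)) ih
      rw [map_map, map_add_range'] at this
      simpa [Function.comp_def, range'_succ, add_comm] using this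
    · simpa [Function.comp_def, h] using ih

lemma getElem_idxsOf_lt_add_iff {s p j : ℕ} (hj : j < (w.idxsOf c s).length) :
    (w.idxsOf c s)[j] < p + s ↔ j < (w.take p).count c := by
  induction w generalizing s p j with
  | nil => simp at hj
  | cons a t ih =>
    cases p with
    | zero => simpa using le_getElem_idxsOf hj
    | succ p =>
      simp only [idxsOf_cons, take_succ_cons, count_cons] at hj ⊢
      by_cases ha : a = c
      · subst ha
        cases j with
        | zero => simp
        | succ j =>
          simp only [beq_self_eq_true, ↓reduceIte, getElem_cons_succ] at hj ⊢
          rw [show p + 1 + s = p + (s + 1) by omega, ih]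
          omega
      · simp only [beq_iff_eq, ha, ↓reduceIte, add_zero] at hj ⊢
        rw [show p + 1 + s = p + (s + 1) by omega, ih]

lemma lt_getElem_reverse_idxsOf_iff {p i : ℕ} (hi : i < (w.idxsOf c 1).reverse.length) :
    p < (w.idxsOf c 1).reverse[i] ↔ i < (w.drop p).count c := by
  have hlen : (w.idxsOf c 1).length = w.count c := length_idxsOf
  have hsplit := congrArg (count c) (take_append_drop p w)
  rw [count_append] at hsplit
  simp only [length_reverse] at hi
  rw [getElem_reverse, ← not_le, ← Nat.lt_succ_iff, getElem_idxsOf_lt_add_iff]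
  omega

lemma count_take_succ_getElem {q : ℕ} (hq : q < w.length) :
    (w.take (q + 1)).count w[q] = (w.take q).count w[q] + 1 := by
  rw [take_add_one, getElem?_eq_getElem hq, Option.toList_some, count_append,
    count_singleton_self]

end Positions

section Lattice

variable {w : List ℕ} {b c : ℕ}

lemma ReverseLattice.of_cons {a : ℕ} (hw : ReverseLattice (a :: w)) : ReverseLattice w :=
  ⟨fun x hx => hw.1 x (mem_cons_of_mem a hx),
    fun s hs => hw.2 s (by rw [tails_cons]; exact mem_cons_of_mem _ hs)⟩

lemma ReverseLattice.count_le_count {s : List ℕ} (hw : ReverseLattice w) (hs : s <:+ w)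
    (hb : 1 ≤ b) (hbc : b ≤ c) : s.count c ≤ s.count b := by
  induction c, hbc using Nat.le_induction with
  | base => rfl
  | succ c hbc ih =>
    have := hw.2 s ((mem_tails s w).2 hs) (c - 1)
    rw [show c - 1 + 2 = c + 1 by omega, show c - 1 + 1 = c by omega] at this
    omega

/-- The suffix of `w` starting at the `i`-th `c` from the right contains `i + 1` letters `c`,
hence at least `i + 1` letters `b`, all of them strictly to the right of that `c`. -/
lemma ReverseLattice.getElem_reverse_idxsOf_lt (hw : ReverseLattice w) (hb : 1 ≤ b)
    (hbc : b < c) {i : ℕ} (hi : i < (w.idxsOf c 1).reverse.length)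
    (hi' : i < (w.idxsOf b 1).reverse.length) :
    (w.idxsOf c 1).reverse[i] < (w.idxsOf b 1).reverse[i] := by
  obtain ⟨hp1, hpw, hwp⟩ := (mem_idxsOf_iff_getElem_sub_pos (s := 1)).1
    (mem_reverse.1 (getElem_mem hi))
  set p := (w.idxsOf c 1).reverse[i]
  have hc : i < (w.drop (p - 1)).count c := (lt_getElem_reverse_idxsOf_iff hi).1 (by omega)
  have hb' := hw.count_le_count (drop_suffix (p - 1) w) hb hbc.le
  rw [drop_eq_getElem_cons hpw, beq_iff_eq.1 hwp, Nat.sub_add_cancel hp1, count_cons_self]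
    at hc hb'
  rw [count_cons_of_ne hbc.ne'] at hb'
  exact (lt_getElem_reverse_idxsOf_iff _).2 (by omega)

end Lattice

def countLT (w : List ℕ) (c : ℕ) : ℕ := w.countP (· < c)

/-- `std(w)⁻¹` in one-line notation, for words with letters in `1, …, M`. -/
def letterPositions (w : List ℕ) (M : ℕ) : List ℕ := (range' 1 M).flatMap (w.idxsOf · 1)

section Standardization

variable {w : List ℕ} {c : ℕ}

lemma countLT_succ : countLT w (c + 1) = countLT w c + w.count c := by
  induction w with
  | nil => rfl
  | cons a t ih =>
    simp only [countLT, countP_cons, count_cons] at ih ⊢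
    rw [ih]
    by_cases h : a = c
    · simp only [h, lt_add_iff_pos_right, Order.lt_one_iff, decide_true, ↓reduceIte,
        lt_self_iff_false, decide_false, Bool.false_eq_true, add_zero, BEq.rfl]
      omega
    · have : (a < c + 1) = (a < c) := by grind
      simp only [this, decide_eq_true_eq, beq_iff_eq, h, ↓reduceIte, add_zero]
      omega

lemma countLT_mono : Monotone (countLT w) :=
  fun _ _ h => countP_mono_left fun x _ hx => by simp at hx ⊢; omega

lemma stdList_length : (stdList w).length = w.length := by simp [stdList]

lemma stdList_getElem {p : ℕ} (hp : p < w.length) :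
    (stdList w)[p]'(by rwa [stdList_length]) =
      countLT w w[p] + (w.take (p + 1)).count w[p] := by
  simp only [stdList, getElem_map, getElem_range, getD_eq_getElem _ _ hp, countLT,
    countP_eq_length_filter, count_eq_countP]
  congr 2

lemma stdList_getElem_mem_Ioc {p : ℕ} (hp : p < w.length) :
    (stdList w)[p]'(by rwa [stdList_length]) ∈ Set.Ioc (countLT w w[p]) (countLT w (w[p] + 1)) := by
  rw [Set.mem_Ioc, stdList_getElem hp, countLT_succ]
  have h1 := count_take_succ_getElem hp
  have h2 := (take_sublist (p + 1) w).count_le w[p]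
  omega

lemma stdList_getElem_lt {p q : ℕ} (hp : p < w.length) (hq : q < w.length)
    (h : w[p] < w[q] ∨ w[p] = w[q] ∧ p < q) :
    (stdList w)[p]'(by rwa [stdList_length]) < (stdList w)[q]'(by rwa [stdList_length]) := by
  rcases h with hlt | ⟨heq, hpq⟩
  · have := countLT_mono (w := w) (show w[p] + 1 ≤ w[q] from hlt)
    obtain ⟨-, hp'⟩ := stdList_getElem_mem_Ioc hp
    obtain ⟨hq', -⟩ := stdList_getElem_mem_Ioc hq
    omega
  · rw [stdList_getElem hp, stdList_getElem hq, heq]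
    have := (take_sublist_take_left (l := w) (show p + 1 ≤ q from hpq)).count_le w[q]
    have := count_take_succ_getElem hq
    omega

lemma stdList_nodup : (stdList w).Nodup := by
  refine pairwise_iff_getElem.2 fun p q hp hq hpq => ?_
  rw [stdList_length] at hp hq
  rcases lt_or_ge w[q] w[p] with h | h
  · exact (stdList_getElem_lt hq hp (.inl h)).ne'
  · exact (stdList_getElem_lt hp hq (h.lt_or_eq.imp_right (⟨·, hpq⟩))).ne

lemma map_stdList_idxsOf :
    (w.idxsOf c 1).map (fun p => (stdList w).getD (p - 1) 0) =
      range' (countLT w c + 1) (w.count c) := by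
  calc (w.idxsOf c 1).map (fun p => (stdList w).getD (p - 1) 0)
      _ = ((w.idxsOf c 1).map (fun p => (w.take p).count c)).map (countLT w c + ·) := by
        rw [map_map]
        refine map_congr_left fun p hp => ?_
        obtain ⟨hp1, hpw, hwp⟩ := mem_idxsOf_iff_getElem_sub_pos.1 hp
        rw [getD_eq_getElem _ _ (by rwa [stdList_length]), stdList_getElem hpw,
          beq_iff_eq.1 hwp, Nat.sub_add_cancel hp1]
        rfl
      _ = _ := by rw [map_count_take_idxsOf, map_add_range']

lemma map_stdList_letterPositions (hpos : ∀ x ∈ w, 0 < x) (M : ℕ) :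
    (letterPositions w M).map (fun p => (stdList w).getD (p - 1) 0) =
      range' 1 (countLT w (M + 1)) := by
  induction M with
  | zero =>
    simpa [letterPositions, countLT, countP_eq_zero, Nat.pos_iff_ne_zero] using hpos
  | succ M ih =>
    rw [letterPositions, range'_concat, flatMap_append, ← letterPositions, map_append, ih,
      flatMap_singleton, one_mul, add_comm 1 M, map_stdList_idxsOf, countLT_succ (c := M + 1),
      ← range'_append, one_mul, add_comm 1]

lemma invList_eq_of_map_eq {σ l : List ℕ} (hσ : σ.Nodup) (hl : ∀ p ∈ l, 1 ≤ p ∧ p ≤ σ.length)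
    (h : l.map (fun p => σ.getD (p - 1) 0) = range' 1 σ.length) : invList σ = l := by
  have hlen : l.length = σ.length := by simpa using congrArg length h
  refine ext_getElem (by simp [invList, hlen]) fun k hk hk' => ?_
  obtain ⟨hk1, hkσ⟩ := hl _ (getElem_mem hk')
  have hval : σ[l[k] - 1] = k + 1 := by
    have := congrArg (·[k]?) h
    simp [getElem?_eq_getElem hk', getElem?_eq_getElem (show l[k] - 1 < σ.length by omega),
      show k < σ.length by omega] at this
    omega
  simp only [invList, getElem_map, getElem_range, ← hval, hσ.idxOf_getElem]
  omega

lemma invList_stdList {M : ℕ} (hpos : ∀ x ∈ w, 0 < x) (hM : ∀ x ∈ w, x ≤ M) :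
    invList (stdList w) = letterPositions w M := by
  refine invList_eq_of_map_eq stdList_nodup (fun p hp => ?_) ?_
  · obtain ⟨c, -, hp⟩ := mem_flatMap.1 hp
    obtain ⟨hp1, hpw, -⟩ := mem_idxsOf_iff_getElem_sub_pos.1 hp
    rw [stdList_length]
    omega
  · rw [map_stdList_letterPositions hpos, stdList_length, countLT,
      countP_eq_length.2 fun x hx => by simpa [Nat.lt_succ_iff] using hM x hx]

end Standardization

section Insertion

def appendColumn : List (List ℕ) → List ℕ → List (List ℕ)
  | B, [] => B
  | [], x :: e => [x] :: appendColumn [] e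
  | b :: B, x :: e => (b ++ [x]) :: appendColumn B e

@[simp]
lemma appendColumn_nil_right (B : List (List ℕ)) : appendColumn B [] = B := by
  cases B <;> rfl

lemma getD_appendColumn (B : List (List ℕ)) (e : List ℕ) (i : ℕ) :
    (appendColumn B e).getD i [] = B.getD i [] ++ e[i]?.toList := by
  induction e generalizing B i with
  | nil => simp
  | cons x e ih =>
    cases B <;> cases i <;> simp only [appendColumn, getD_cons_zero, getD_cons_succ, ih] <;> simp

lemma length_appendColumn (B : List (List ℕ)) (e : List ℕ) :
    (appendColumn B e).length = max B.length e.length := by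
  induction e generalizing B with
  | nil => simp
  | cons x e ih => cases B <;> simp [appendColumn, ih]

lemma map_appendColumn (f : ℕ → ℕ) (B : List (List ℕ)) (e : List ℕ) :
    (appendColumn B e).map (map f) = appendColumn (B.map (map f)) (e.map f) := by
  induction e generalizing B with
  | nil => simp
  | cons x e ih => cases B <;> simp [appendColumn, ih]

lemma insertRow_of_forall_le {y : ℕ} {row : List ℕ} (h : ∀ x ∈ row, y ≤ x) :
    insertRow y row = (row ++ [y], none) := by
  induction row with
  | nil => rfl
  | cons a s ih =>
    simp only [mem_cons, forall_eq_or_imp] at h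
    simp [insertRow, h.1, ih h.2]

lemma insertRow_append_singleton {y b : ℕ} {row : List ℕ} (h : ∀ x ∈ row, y ≤ x) (hb : b < y) :
    insertRow y (row ++ [b]) = (row ++ [y], some b) := by
  induction row with
  | nil => simp [insertRow, hb]
  | cons a s ih =>
    simp only [mem_cons, forall_eq_or_imp] at h
    simp [insertRow, h.1, ih h.2]

/-- `y` bumps the last entry `e[0]` of the first row, which bumps the last entry `e[1]` of the
second row, and so on. -/
lemma insertT_appendColumn (e : List ℕ) (B : List (List ℕ)) (y : ℕ)
    (he : (y :: e).Pairwise (· > ·))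
    (hB : ∀ i (hi : i < (y :: e).length), ∀ x ∈ B.getD i [], (y :: e)[i] < x) :
    insertT y (appendColumn B e) = (appendColumn B (y :: e), e.length + 1) := by
  induction e generalizing B y with
  | nil =>
    cases B with
    | nil => rfl
    | cons b B =>
      have hb : ∀ x ∈ b, y ≤ x := fun x hx => (hB 0 (by simp) x (by simpa using hx)).le
      simp [insertT, appendColumn, insertRow_of_forall_le hb]
  | cons x e ih =>
    have hxy : x < y := rel_of_pairwise_cons he mem_cons_self
    cases B with
    | nil =>
      simp [appendColumn, insertT, insertRow, hxy,
        ih [] x (pairwise_cons.1 he).2 (fun i _ z hz => by simp at hz)]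
    | cons b B =>
      have hb : ∀ z ∈ b, y ≤ z := fun z hz => (hB 0 (by simp) z (by simpa using hz)).le
      have hB' : ∀ i (hi : i < (x :: e).length), ∀ z ∈ B.getD i [], (x :: e)[i] < z :=
        fun i hi z hz => hB (i + 1) (by simpa using hi) z (by simpa using hz)
      simp [appendColumn, insertT, insertRow_append_singleton hb hxy,
        ih B x (pairwise_cons.1 he).2 hB']

def insertList (l : List ℕ) (P : List (List ℕ)) : List (List ℕ) :=
  l.foldl (fun P y => (insertT y P).1) P

lemma insertList_append (l₁ l₂ : List ℕ) (P : List (List ℕ)) :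
    insertList (l₁ ++ l₂) P = insertList l₂ (insertList l₁ P) :=
  foldl_append

lemma PTab_eq_insertList (σ : List ℕ) : PTab σ = insertList σ [] := by
  suffices ∀ v P Q, (RSaux σ v (P, Q)).1 = insertList σ P from this _ _ _
  induction σ with
  | nil => intro v P Q; rfl
  | cons y σ ih => intro v P Q; exact ih _ _ _

lemma insertList_eq_appendColumn (B : List (List ℕ)) {q : List ℕ} (hq : q.Pairwise (· < ·))
    (hB : ∀ i (hi : i < q.reverse.length), ∀ x ∈ B.getD i [], q.reverse[i] < x) :
    insertList q B = appendColumn B q.reverse := by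
  induction q using reverseRecOn with
  | nil => simp [insertList]
  | append_singleton q y ih =>
    have hrev : (y :: q.reverse).Pairwise (· > ·) := by
      simpa using (pairwise_reverse (R := (· > ·))).2 hq
    have hle : ∀ i (hi : i < q.reverse.length),
        q.reverse[i] < (y :: q.reverse)[i]'(by simp at hi ⊢; omega) :=
      fun i hi => pairwise_iff_getElem.1 hrev i (i + 1) _ (by simpa using hi) (by omega)
    rw [insertList_append, ih (hq.sublist (sublist_append_left _ _))
      fun i hi x hx => (hle i hi).trans (by simpa using hB i (by simp at hi ⊢; omega) x hx)]
    simpa [insertList] using congrArg Prod.fst (insertT_appendColumn _ B y hrev (by simpa using hB))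

end Insertion

section Columns

def ofColumns (cols : List (List ℕ)) : List (List ℕ) := cols.foldl appendColumn []

lemma ofColumns_append_singleton (cols : List (List ℕ)) (e : List ℕ) :
    ofColumns (cols ++ [e]) = appendColumn (ofColumns cols) e := by
  simp [ofColumns]

lemma getD_ofColumns (cols : List (List ℕ)) (i : ℕ) :
    (ofColumns cols).getD i [] = cols.filterMap (·[i]?) := by
  induction cols using reverseRecOn with
  | nil => simp [ofColumns]
  | append_singleton cols e ih =>
    rw [ofColumns_append_singleton, getD_appendColumn, ih, filterMap_append]
    cases h : e[i]? <;> simp [h]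

lemma lt_length_ofColumns_iff (cols : List (List ℕ)) (i : ℕ) :
    i < (ofColumns cols).length ↔ ∃ col ∈ cols, i < col.length := by
  induction cols using reverseRecOn with
  | nil => simp [ofColumns]
  | append_singleton cols e ih =>
    rw [ofColumns_append_singleton, length_appendColumn, lt_max_iff, ih]
    simp [or_and_right, exists_or]

lemma getElem?_ofColumns (cols : List (List ℕ)) (r : ℕ) :
    (ofColumns cols)[r]? =
      if ∃ col ∈ cols, r < col.length then some (cols.filterMap (·[r]?)) else none := by
  split_ifs with h <;> rw [← lt_length_ofColumns_iff] at h
  · rw [getElem?_eq_getElem h, ← getD_ofColumns, getD_eq_getElem _ _ h]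
  · exact getElem?_eq_none (not_lt.1 h)

lemma map_ofColumns (f : ℕ → ℕ) (cols : List (List ℕ)) :
    (ofColumns cols).map (map f) = ofColumns (cols.map (map f)) := by
  induction cols using reverseRecOn with
  | nil => rfl
  | append_singleton cols e ih =>
    rw [ofColumns_append_singleton, map_appendColumn, ih, map_append, map_singleton,
      ofColumns_append_singleton]

lemma getElem?_addBoxCol {i v h : ℕ} {t : List (List ℕ)} (hh : h ≤ t.length)
    (hbelow : ∀ r (hr : r < h), t[r].length + 1 ≠ i)
    (hrow : ∀ hh : h < t.length, t[h].length + 1 = i) (r : ℕ) :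
    (addBoxCol i v t)[r]? = if r = h then some (t.getD h [] ++ [v]) else t[r]? := by
  induction t generalizing h r with
  | nil =>
    obtain rfl : h = 0 := by simpa using hh
    cases r <;> simp [addBoxCol]
  | cons row t ih =>
    by_cases hi : row.length + 1 = i
    · obtain rfl : h = 0 := by
        by_contra h0
        exact hbelow 0 (Nat.pos_of_ne_zero h0) hi
      cases r <;> simp [addBoxCol, hi]
    · obtain ⟨h, rfl⟩ : ∃ h', h = h' + 1 := by
        cases h with
        | zero => exact absurd (hrow (by simp)) hi
        | succ h => exact ⟨h, rfl⟩
      have := ih (h := h) (by simpa using hh) (fun r hr => hbelow (r + 1) (by omega))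
        (fun hh => hrow (by simpa using hh))
      cases r <;> simp [addBoxCol, hi, this]

lemma addBoxCol_ofColumns {L R : List (List ℕ)} {col : List ℕ} (v : ℕ)
    (hL : ∀ c ∈ L, col.length < c.length) (hR : ∀ c ∈ R, c.length ≤ col.length) :
    addBoxCol (L.length + 1) v (ofColumns (L ++ col :: R)) =
      ofColumns (L ++ (col ++ [v]) :: R) := by
  set t := ofColumns (L ++ col :: R)
  have hrow : ∀ r, t.getD r [] =
      L.filterMap (·[r]?) ++ col[r]?.toList ++ R.filterMap (·[r]?) := by
    intro r
    rw [getD_ofColumns, filterMap_append, filterMap_cons]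
    cases col[r]? <;> simp
  have hLlen : ∀ r ≤ col.length, (L.filterMap (·[r]?)).length = L.length := fun r hr => by
    rw [length_filterMap_eq_countP, countP_eq_length]
    exact fun c hc => by simpa using hr.trans_lt (hL c hc)
  have hRnil : ∀ r, col.length ≤ r → R.filterMap (·[r]?) = [] := fun r hr => by
    rw [filterMap_eq_nil_iff]
    exact fun c hc => getElem?_eq_none ((hR c hc).trans hr)
  have hlen : col.length ≤ t.length := le_of_forall_lt fun r hr =>
    (lt_length_ofColumns_iff _ _).2 ⟨col, by simp, hr⟩
  have hbelow : ∀ r (hr : r < col.length), t[r].length + 1 ≠ L.length + 1 := by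
    intro r hr
    rw [← getD_eq_getElem _ [], hrow, getElem?_eq_getElem hr]
    simp [hLlen r hr.le]
  have htop : ∀ hh : col.length < t.length, t[col.length].length + 1 = L.length + 1 := by
    intro hh
    rw [← getD_eq_getElem _ [], hrow, getElem?_eq_none le_rfl, hRnil _ le_rfl]
    simp [hLlen _ le_rfl]
  refine ext_getElem? fun r => ?_
  rw [getElem?_addBoxCol hlen hbelow htop]
  split_ifs with hr
  · subst hr
    rw [hrow, getElem?_eq_none le_rfl, hRnil _ le_rfl, getElem?_ofColumns,
      if_pos ⟨col ++ [v], by simp, by simp⟩]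
    simp [filterMap_append, hRnil _ le_rfl]
  · have hcol : (col ++ [v])[r]? = col[r]? := by
      rcases Nat.lt_or_gt_of_ne hr with h | h
      · exact getElem?_append_left h
      · rw [getElem?_eq_none (by simpa using h), getElem?_eq_none h.le]
    have hlt : r < (col ++ [v]).length ↔ r < col.length := by simp; omega
    simp only [t, getElem?_ofColumns, filterMap_append, filterMap_cons, hcol]
    congr 1
    simp only [mem_append, mem_cons, or_and_right, exists_or, exists_eq_left, hlt]

end Columns

def positionTableau (w : List ℕ) (M : ℕ) : List (List ℕ) :=
  ofColumns ((range' 1 M).map fun c => (w.idxsOf c 1).reverse)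

lemma insertList_letterPositions {w : List ℕ} (hw : ReverseLattice w) (M : ℕ) :
    insertList (letterPositions w M) [] = positionTableau w M := by
  induction M with
  | zero => rfl
  | succ M ih =>
    have hB : ∀ i (hi : i < (w.idxsOf (M + 1) 1).reverse.length),
        ∀ x ∈ (positionTableau w M).getD i [], (w.idxsOf (M + 1) 1).reverse[i] < x := by
      intro i hi x hx
      rw [positionTableau, getD_ofColumns, mem_filterMap] at hx
      obtain ⟨_, hcol, hx⟩ := hx
      obtain ⟨c, hc, rfl⟩ := mem_map.1 hcol
      obtain ⟨hi', rfl⟩ := List.getElem?_eq_some_iff.1 hx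
      rw [mem_range'_1] at hc
      exact hw.getElem_reverse_idxsOf_lt hc.1 (by omega) hi hi'
    calc insertList (letterPositions w (M + 1)) []
        _ = insertList (w.idxsOf (M + 1) 1) (positionTableau w M) := by
          rw [← ih, letterPositions, range'_concat, flatMap_append, insertList_append]
          simp [letterPositions, add_comm]
        _ = appendColumn (positionTableau w M) (w.idxsOf (M + 1) 1).reverse :=
          insertList_eq_appendColumn _ pairwise_idxsOf hB
        _ = positionTableau w (M + 1) := by
          rw [positionTableau, positionTableau, range'_concat, map_append, map_singleton,
            ofColumns_append_singleton]
          simp [add_comm]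

lemma map_addBoxCol (f : ℕ → ℕ) (i v : ℕ) (t : List (List ℕ)) :
    (addBoxCol i v t).map (map f) = addBoxCol i (f v) (t.map (map f)) := by
  induction t with
  | nil => rfl
  | cons row t ih => by_cases h : row.length + 1 = i <;> simp [addBoxCol, h, ih]

lemma TwTab_cons (a : ℕ) (w : List ℕ) :
    TwTab (a :: w) = addBoxCol a 1 ((TwTab w).map (map (· + 1))) := by
  have hstep : ∀ k ∈ range w.length, ∀ t : List (List ℕ),
      addBoxCol ((a :: w).reverse.getD k 0) (w.length + 1 - k) t =
        addBoxCol (w.reverse.getD k 0) (w.length - k + 1) t := by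
    intro k hk t
    rw [mem_range] at hk
    rw [reverse_cons, getD_append _ _ _ _ (by simpa using hk), Nat.sub_add_comm hk.le]
  rw [TwTab, length_cons, range_succ, foldl_append, foldl_ext _ _ _ fun t k hk => hstep k hk t,
    TwTab, ← foldl_hom (map (map (· + 1)))
      (g₂ := fun t k => addBoxCol (w.reverse.getD k 0) (w.length - k + 1) t)
      fun t k => (map_addBoxCol (· + 1) _ _ t).symm]
  simp

lemma range'_one_eq_append_cons {a M : ℕ} (ha : 1 ≤ a) (haM : a ≤ M) :
    range' 1 M = range' 1 (a - 1) ++ a :: range' (a + 1) (M - a) := by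
  obtain ⟨a, rfl⟩ := Nat.exists_eq_add_of_le' ha
  rw [← range'_succ, Nat.add_sub_cancel, show a + 1 = 1 + 1 * a by omega, range'_append]
  congr 1
  omega

lemma TwTab_eq_positionTableau {M : ℕ} {w : List ℕ} (hw : ReverseLattice w)
    (hM : ∀ x ∈ w, x ≤ M) : TwTab w = positionTableau w M := by
  induction w with
  | nil =>
    simp only [positionTableau, idxsOf_nil, reverse_nil, ofColumns, foldl_map]
    exact (foldl_fixed' (fun _ => appendColumn_nil_right []) _).symm
  | cons a w ih =>
    have ha1 : 1 ≤ a := hw.1 a mem_cons_self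
    have haM : a ≤ M := hM a mem_cons_self
    set F : ℕ → List ℕ := fun c => (w.idxsOf c 1).reverse.map (· + 1) with hF
    have hG : ∀ c, c ≠ a → F c = ((a :: w).idxsOf c 1).reverse := fun c hc => by
      rw [reverse_idxsOf_cons_one, if_neg (Ne.symm hc), append_nil]
    have hL : ∀ col ∈ (range' 1 (a - 1)).map F, (F a).length < col.length := by
      simp only [mem_map, mem_range'_1, forall_exists_index, and_imp]
      rintro _ c hc1 hca rfl
      have := hw.count_le_count (suffix_refl _) hc1 (show c ≤ a by omega)
      simp [hF, show a ≠ c by omega] at this ⊢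
      omega
    have hR : ∀ col ∈ (range' (a + 1) (M - a)).map F, col.length ≤ (F a).length := by
      simp only [mem_map, mem_range', forall_exists_index, and_imp]
      rintro _ c i hi rfl rfl
      simpa [hF] using hw.of_cons.count_le_count (suffix_refl _) ha1 (show a ≤ a + 1 + i by omega)
    have key := addBoxCol_ofColumns 1 hL hR
    rw [length_map, length_range', Nat.sub_add_cancel ha1] at key
    rw [TwTab_cons, ih hw.of_cons (fun x hx => hM x (mem_cons_of_mem a hx)), positionTableau,
      map_ofColumns, map_map, range'_one_eq_append_cons ha1 haM, map_append, map_cons]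
    change addBoxCol a 1 (ofColumns (map F _ ++ F a :: map F _)) = _
    rw [key, positionTableau, range'_one_eq_append_cons ha1 haM, map_append, map_cons,
      reverse_idxsOf_cons_one, if_pos rfl]
    congr 2
    · exact map_congr_left fun c hc => hG c (by simp at hc; omega)
    · exact congrArg _ (map_congr_left fun c hc => hG c (by simp at hc; omega))

/-- Let `w = i_n ⋯ i_1` be a reverse lattice word (read left to right) and
`σ = std(w)`.  Then `T_w = P(σ⁻¹)`, the insertion tableau of `σ⁻¹` under the
variant Robinson–Schensted algorithm. -/
theorem Tw_eq_insertion_tableau (w : List ℕ) (hw : ReverseLattice w) :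
    TwTab w = PTab (invList (stdList w)) := by
  have hM : ∀ x ∈ w, x ≤ w.sum := fun x hx => le_sum_of_mem hx
  rw [PTab_eq_insertList, invList_stdList hw.1 hM, insertList_letterPositions hw,
    TwTab_eq_positionTableau hw hM]

end CompJdt
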